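/- arXiv:1107.5262 — 3 statements merged into one kernel-verified Lean document; each statement's English description precedes it below -/
import Mathlib

section
/- Let p̃₁, p̃₂, p̃₃, p̃₄ ∈ K[t,s] be nonzero polynomials with gcd(p̃₁,p̃₂,p̃₃,p̃₄) = 1. For each i ∈ {1,2,3,4} and each of the three indices j ≠ i, let q_{i,j} ∈ K[t,s] be the denominator of p̃_j/p̃_i written in reduced form. Then the set of affine base points { (t₀,s₀) ∈ K² : p̃₁(t₀,s₀) = p̃₂(t₀,s₀) = p̃₃(t₀,s₀) = p̃₄(t₀,s₀) = 0 } equals the intersection over i = 1,...,4 of the sets { (t₀,s₀) ∈ K² : lcm of the three polynomials q_{i,j} (j ≠ i) vanishes at (t₀,s₀) }. -/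
/-!
A common zero `x` of the `p i` is a zero of some prime factor `f` of `p i`. Were `f` coprime to
every `q i j`, it would divide every cofactor `gcd (p j) (p i)`, hence every `p j`, which the gcd
condition forbids; so `f` divides some `q i j`, hence `L i`, and `L i` vanishes at `x`.
Conversely `L i` divides `p i`, since each `q i j` does.
-/

open MvPolynomial

theorem exists_prime_dvd_of_map_eq_zero {R S : Type*} [CommSemiring R] [IsDomain R]
    [UniqueFactorizationMonoid R] [Semiring S] [Nontrivial S] [NoZeroDivisors S]
    (φ : R →+* S) {a : R} (ha : a ≠ 0) (hφa : φ a = 0) :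
    ∃ f, Prime f ∧ f ∣ a ∧ φ f = 0 := by
  induction a using UniqueFactorizationMonoid.induction_on_prime with
  | h₁ => exact absurd rfl ha
  | h₂ u hu => exact absurd hφa (hu.map φ).ne_zero
  | h₃ a f _ hf ih =>
    rw [map_mul] at hφa
    rcases mul_eq_zero.mp hφa with h | h
    · exact ⟨f, hf, dvd_mul_right f a, h⟩
    · obtain ⟨g, hg, hga, hφg⟩ := ih (right_ne_zero_of_mul ha) h
      exact ⟨g, hg, hga.mul_left f, hφg⟩

theorem exists_ne_prime_dvd_denom {R ι : Type*} [CommMonoidWithZero R]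
    {p : ι → R} {q : ι → ι → R} (hgcd : ∀ d, (∀ i, d ∣ p i) → IsUnit d)
    (hq : ∀ i j, j ≠ i → ∃ g, g ∣ p j ∧ q i j * g = p i)
    {f : R} (hf : Prime f) {i : ι} (hfi : f ∣ p i) :
    ∃ j ≠ i, f ∣ q i j := by
  by_contra! hfq
  refine hf.not_isUnit (hgcd f fun j => ?_)
  by_cases hji : j = i
  · exact hji ▸ hfi
  · obtain ⟨g, hgj, hqg⟩ := hq i j hji
    exact ((hf.dvd_or_dvd (hqg ▸ hfi)).resolve_left (hfq j hji)).trans hgj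

theorem affine_base_points_eq_inter_general {K : Type*} [Field K]
    (p : Fin 4 → MvPolynomial (Fin 2) K)
    (hne : ∀ i, p i ≠ 0)
    (hgcd : ∀ d : MvPolynomial (Fin 2) K, (∀ i, d ∣ p i) → IsUnit d)
    (q : Fin 4 → Fin 4 → MvPolynomial (Fin 2) K)
    -- for `j ≠ i`, `q i j` is the denominator of `p j / p i` in reduced form,
    -- i.e. `q i j = p i / gcd (p j) (p i)`.
    (hq : ∀ i j : Fin 4, j ≠ i → ∃ g : MvPolynomial (Fin 2) K,
        g ∣ p j ∧ g ∣ p i ∧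
        (∀ d : MvPolynomial (Fin 2) K, d ∣ p j → d ∣ p i → d ∣ g) ∧
        q i j * g = p i)
    (L : Fin 4 → MvPolynomial (Fin 2) K)
    -- `L i` is an lcm of the three polynomials `q i j`, `j ≠ i`.
    (hL₁ : ∀ i j : Fin 4, j ≠ i → q i j ∣ L i)
    (hL₂ : ∀ i : Fin 4, ∀ m : MvPolynomial (Fin 2) K,
        (∀ j : Fin 4, j ≠ i → q i j ∣ m) → L i ∣ m) :
    {x : Fin 2 → K | ∀ i, MvPolynomial.eval x (p i) = 0} =
      ⋂ i : Fin 4, {x : Fin 2 → K | MvPolynomial.eval x (L i) = 0} := by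
  have hq' : ∀ i j, j ≠ i → ∃ g, g ∣ p j ∧ q i j * g = p i := fun i j hji =>
    (hq i j hji).imp fun _ hg => ⟨hg.1, hg.2.2.2⟩
  have hLp : ∀ i, L i ∣ p i := fun i =>
    hL₂ i (p i) fun j hji => let ⟨g, _, hqg⟩ := hq' i j hji; Dvd.intro g hqg
  ext x
  simp only [Set.mem_ofPred_eq, Set.mem_iInter]
  refine ⟨fun hx i => ?_, fun hx i => ?_⟩
  · obtain ⟨f, hf, hfp, hfx⟩ := exists_prime_dvd_of_map_eq_zero (eval x) (hne i) (hx i)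
    obtain ⟨j, hji, hfq⟩ := exists_ne_prime_dvd_denom hgcd hq' hf hfp
    exact zero_dvd_iff.mp (hfx ▸ map_dvd (eval x) (hfq.trans (hL₁ i j hji)))
  · exact zero_dvd_iff.mp (hx i ▸ map_dvd (eval x) (hLp i))

theorem affine_base_points_eq_inter {K : Type*} [Field K] [IsAlgClosed K] [CharZero K]
    (p : Fin 4 → MvPolynomial (Fin 2) K)
    (hne : ∀ i, p i ≠ 0)
    (hgcd : ∀ d : MvPolynomial (Fin 2) K, (∀ i, d ∣ p i) → IsUnit d)
    (q : Fin 4 → Fin 4 → MvPolynomial (Fin 2) K)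
    -- for `j ≠ i`, `q i j` is the denominator of `p j / p i` in reduced form,
    -- i.e. `q i j = p i / gcd (p j) (p i)`.
    (hq : ∀ i j : Fin 4, j ≠ i → ∃ g : MvPolynomial (Fin 2) K,
        g ∣ p j ∧ g ∣ p i ∧
        (∀ d : MvPolynomial (Fin 2) K, d ∣ p j → d ∣ p i → d ∣ g) ∧
        q i j * g = p i)
    (L : Fin 4 → MvPolynomial (Fin 2) K)
    -- `L i` is an lcm of the three polynomials `q i j`, `j ≠ i`.
    (hL₁ : ∀ i j : Fin 4, j ≠ i → q i j ∣ L i)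
    (hL₂ : ∀ i : Fin 4, ∀ m : MvPolynomial (Fin 2) K,
        (∀ j : Fin 4, j ≠ i → q i j ∣ m) → L i ∣ m) :
    {x : Fin 2 → K | ∀ i, MvPolynomial.eval x (p i) = 0} =
      ⋂ i : Fin 4, {x : Fin 2 → K | MvPolynomial.eval x (L i) = 0} :=
  affine_base_points_eq_inter_general p hne hgcd q hq L hL₁ hL₂
end

section
/- Let f ∈ K[x,y,z] be an irreducible polynomial of total degree d defining the surface Z = {(x,y,z) ∈ K³ : f(x,y,z) = 0}. Then Z is a plane (equivalently d = 1) if and only if there exists a nonempty subset Ω ⊆ Z, dense in Z in the Zariski topology, such that mult(A,f) = d for every A ∈ Ω. -/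
/-!
If `f` is linear, every zero of `f` is a point of multiplicity one, so `Ω = Z` works; `Z` is
nonempty by the Nullstellensatz. Conversely, if every point of a dense subset `Ω` of `Z` has
multiplicity `d ≥ 2`, the partial derivatives of `f` vanish on `Ω`, hence on `Z`. By the
Nullstellensatz the irreducible `f` then divides each `∂ᵢ f`, which has smaller degree, so every
`∂ᵢ f` is zero and `f` is constant (characteristic zero), which an irreducible polynomial is not.
-/

open MvPolynomial

/-- The multiplicity of a point `A` on the hypersurface defined by `f`:
the smallest total degree of a monomial of the translate of `f` by `A`. -/
noncomputable def multAt {K : Type*} [CommRing K] {n : ℕ} (A : Fin n → K)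
    (f : MvPolynomial (Fin n) K) : ℕ :=
  sInf {k | ∃ m ∈ (MvPolynomial.aeval
      (fun i => MvPolynomial.X i + MvPolynomial.C (A i)) f).support,
      (m.sum fun _ e => e) = k}

namespace MvPolynomial

lemma totalDegree_bind₁_le {R σ τ : Type*} [CommSemiring R] {k : ℕ}
    (g : σ → MvPolynomial τ R) (hg : ∀ i, (g i).totalDegree ≤ k) (f : MvPolynomial σ R) :
    (bind₁ g f).totalDegree ≤ k * f.totalDegree := by
  conv_lhs => rw [f.as_sum, map_sum]
  refine totalDegree_finsetSum_le fun m hm => ?_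
  rw [bind₁_monomial]
  calc _ ≤ (C (coeff m f)).totalDegree + (m.prod fun i e => g i ^ e).totalDegree :=
        totalDegree_mul _ _
    _ ≤ ∑ i ∈ m.support, (g i ^ m i).totalDegree := by
        rw [totalDegree_C, zero_add]; exact totalDegree_finsetProd _ _
    _ ≤ ∑ i ∈ m.support, k * m i := Finset.sum_le_sum fun i _ =>
        (totalDegree_pow _ _).trans (by rw [mul_comm]; exact Nat.mul_le_mul_right _ (hg i))
    _ = k * m.degree := by rw [← Finset.mul_sum]; rfl
    _ ≤ k * f.totalDegree := Nat.mul_le_mul_left _ (le_totalDegree hm)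

section Translate

variable {R σ : Type*} [CommRing R]

/-- Definitionally the substitution `X i ↦ X i + C (A i)` used in `multAt`. -/
noncomputable def translate (A : σ → R) : MvPolynomial σ R →ₐ[R] MvPolynomial σ R :=
  bind₁ fun i => X i + C (A i)

lemma translate_translate (A B : σ → R) (f : MvPolynomial σ R) :
    translate B (translate A f) = translate (A + B) f := by
  rw [translate, translate, translate, bind₁_bind₁]
  congr 2
  funext i
  simp only [map_add, bind₁_X_right, algHom_C, algebraMap_eq, Pi.add_apply]
  ring

lemma translate_zero : translate (0 : σ → R) = AlgHom.id R _ := by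
  simp [translate]

lemma translate_injective (A : σ → R) : Function.Injective (translate A) := fun f g h => by
  have := congrArg (translate (-A)) h
  rwa [translate_translate, translate_translate, add_neg_cancel, translate_zero] at this

lemma eval_translate (x A : σ → R) (f : MvPolynomial σ R) :
    eval x (translate A f) = eval (x + A) f := by
  have hpoint : (fun i => eval x (X i + C (A i))) = x + A := by
    funext i; simp
  exact (eval₂Hom_bind₁ _ _ _ f).trans (congrArg (fun y => eval y f) hpoint)

lemma constantCoeff_translate (A : σ → R) (f : MvPolynomial σ R) :
    constantCoeff (translate A f) = eval A f := by
  rw [← eval_zero, eval_translate, zero_add]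

lemma totalDegree_translate_le (A : σ → R) (f : MvPolynomial σ R) :
    (translate A f).totalDegree ≤ f.totalDegree := by
  have hX (i : σ) : (X i + C (A i)).totalDegree ≤ 1 :=
    (totalDegree_add _ _).trans <| max_le ((totalDegree_monomial_le _ _).trans_eq (by simp))
      ((totalDegree_C _).trans_le zero_le_one)
  exact (totalDegree_bind₁_le _ hX f).trans_eq (one_mul _)

lemma pderiv_translate (A : σ → R) (i : σ) (f : MvPolynomial σ R) :
    pderiv i (translate A f) = translate A (pderiv i f) := by
  induction f using MvPolynomial.induction_on with
  | C a => simp [translate]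
  | add p q hp hq => simp only [map_add, hp, hq]
  | mul_X p j hp =>
    simp only [translate] at hp ⊢
    rcases eq_or_ne i j with rfl | h
    · simp [hp]
    · simp [hp, pderiv_X_of_ne h.symm]

end Translate

lemma totalDegree_pderiv_lt {R σ : Type*} [CommSemiring R] {f : MvPolynomial σ R} {i : σ}
    (h : pderiv i f ≠ 0) : (pderiv i f).totalDegree < f.totalDegree := by
  obtain ⟨m, hm, hmax⟩ :=
    Finset.exists_mem_eq_sup _ (support_nonempty.2 h) fun m => m.degree
  have hm' : m + Finsupp.single i 1 ∈ f.support := by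
    rw [mem_support_iff, coeff_pderiv] at hm
    exact mem_support_iff.2 (left_ne_zero_of_mul hm)
  calc (pderiv i f).totalDegree = m.degree := hmax
    _ < (m + Finsupp.single i 1).degree := by simp
    _ ≤ f.totalDegree := le_totalDegree hm'

lemma exists_pderiv_ne_zero {R σ : Type*} [CommRing R] [IsDomain R] [CharZero R]
    {f : MvPolynomial σ R} (hf : 0 < f.totalDegree) : ∃ i, pderiv i f ≠ 0 := by
  obtain ⟨m, hm, hmax⟩ := Finset.exists_mem_eq_sup f.support
    (support_nonempty.2 (by rintro rfl; simp at hf)) fun m => m.degree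
  obtain ⟨i, hi⟩ : ∃ i, m i ≠ 0 := by
    by_contra! h
    rw [show m = 0 from Finsupp.ext h, map_zero] at hmax
    exact hf.ne' hmax
  refine ⟨i, fun h => ?_⟩
  have hm' : m - Finsupp.single i 1 + Finsupp.single i 1 = m :=
    tsub_add_cancel_of_le (Finsupp.single_le_iff.2 (Nat.one_le_iff_ne_zero.2 hi))
  have := congrArg (coeff (m - Finsupp.single i 1)) h
  rw [coeff_pderiv, hm', coeff_zero] at this
  exact mul_ne_zero (mem_support_iff.1 hm) (Nat.cast_add_one_ne_zero _) this

lemma totalDegree_pos_of_irreducible {K σ : Type*} [Field K] {f : MvPolynomial σ K}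
    (hf : Irreducible f) : 0 < f.totalDegree := by
  refine Nat.pos_of_ne_zero fun h => hf.not_isUnit ?_
  refine isUnit_iff_totalDegree_of_isReduced.2 ⟨isUnit_iff_ne_zero.2 fun h0 => hf.ne_zero ?_, h⟩
  rw [totalDegree_eq_zero_iff_eq_C.1 h, h0, C_0]

section Nullstellensatz

variable {K σ : Type*} [Field K] [IsAlgClosed K] [Finite σ]

lemma dvd_of_forall_eval_eq_zero {f g : MvPolynomial σ K} (hf : Irreducible f)
    (hg : ∀ x, eval x f = 0 → eval x g = 0) : f ∣ g := by
  have := (Ideal.span_singleton_prime hf.ne_zero).2 hf.prime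
  rw [← Ideal.mem_span_singleton, ← IsPrime.vanishingIdeal_zeroLocus (K := K) (Ideal.span {f}),
    mem_vanishingIdeal_iff]
  intro x hx
  exact hg x (hx f (Ideal.mem_span_singleton_self f))

lemma exists_eval_eq_zero_of_irreducible {f : MvPolynomial σ K} (hf : Irreducible f) :
    ∃ x, eval x f = 0 := by
  by_contra! h
  exact hf.not_isUnit <|
    isUnit_of_dvd_one (dvd_of_forall_eval_eq_zero hf fun x hx => absurd hx (h x))

end Nullstellensatz

end MvPolynomial

section Multiplicity

variable {K : Type*} [CommRing K] {n : ℕ} {A : Fin n → K} {f : MvPolynomial (Fin n) K}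

lemma multAt_le_degree {m : Fin n →₀ ℕ} (hm : m ∈ (translate A f).support) :
    multAt A f ≤ m.degree :=
  Nat.sInf_le ⟨m, hm, rfl⟩

lemma le_multAt {k : ℕ} (hf : f ≠ 0) (h : ∀ m ∈ (translate A f).support, k ≤ m.degree) :
    k ≤ multAt A f := by
  obtain ⟨m, hm⟩ := support_nonempty.2 ((map_ne_zero_iff _ (translate_injective A)).2 hf)
  exact le_csInf ⟨_, m, hm, rfl⟩ (by rintro _ ⟨m, hm, rfl⟩; exact h m hm)

lemma multAt_le_totalDegree (hf : f ≠ 0) : multAt A f ≤ f.totalDegree := by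
  obtain ⟨m, hm⟩ := support_nonempty.2 ((map_ne_zero_iff _ (translate_injective A)).2 hf)
  exact (multAt_le_degree hm).trans ((le_totalDegree hm).trans (totalDegree_translate_le A f))

lemma one_le_multAt (hf : f ≠ 0) (hA : eval A f = 0) : 1 ≤ multAt A f := by
  refine le_multAt hf fun m hm => Nat.one_le_iff_ne_zero.2 fun h0 => ?_
  rw [Finsupp.degree_eq_zero_iff] at h0
  rw [h0, mem_support_iff, ← constantCoeff_eq, constantCoeff_translate] at hm
  exact hm hA

lemma eval_pderiv_eq_zero_of_two_le_multAt (h : 2 ≤ multAt A f) (i : Fin n) :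
    eval A (pderiv i f) = 0 := by
  rw [← constantCoeff_translate, ← pderiv_translate, constantCoeff_eq, coeff_pderiv, zero_add]
  by_contra hne
  have := multAt_le_degree (mem_support_iff.2 (left_ne_zero_of_mul hne))
  rw [Finsupp.degree_single] at this
  omega

end Multiplicity

theorem plane_iff_dense_max_mult {K : Type*} [Field K] [IsAlgClosed K] [CharZero K]
    (f : MvPolynomial (Fin 3) K) (hf : Irreducible f) (d : ℕ)
    (hd : f.totalDegree = d)
    (Z : Set (Fin 3 → K)) (hZ : Z = {x | MvPolynomial.eval x f = 0}) :
    d = 1 ↔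
      ∃ Ω : Set (Fin 3 → K), Ω.Nonempty ∧ Ω ⊆ Z ∧
        (∀ g : MvPolynomial (Fin 3) K,
          (∀ x ∈ Ω, MvPolynomial.eval x g = 0) → ∀ x ∈ Z, MvPolynomial.eval x g = 0) ∧
        (∀ A ∈ Ω, multAt A f = d) := by
  subst hZ hd
  constructor
  · intro hd1
    refine ⟨_, exists_eval_eq_zero_of_irreducible hf, subset_rfl, fun g hg => hg, fun A hA => ?_⟩
    exact le_antisymm (multAt_le_totalDegree hf.ne_zero)
      (hd1.trans_le (one_le_multAt hf.ne_zero hA))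
  · rintro ⟨Ω, -, -, hdense, hmult⟩
    have hpos := totalDegree_pos_of_irreducible hf
    obtain ⟨i, hi⟩ := exists_pderiv_ne_zero hpos
    by_contra hne
    have hvanish : ∀ x, eval x f = 0 → eval x (pderiv i f) = 0 :=
      hdense _ fun A hA =>
        eval_pderiv_eq_zero_of_two_le_multAt (by have := hmult A hA; omega) i
    have hdvd := dvd_of_forall_eval_eq_zero hf hvanish
    exact (totalDegree_le_of_dvd_of_isDomain hdvd hi).not_gt (totalDegree_pderiv_lt hi)
end

section
/- Let f₁, ..., f_m ∈ K[u₁,u₂][t] be nonzero polynomials (m ≥ 2), let h = gcd(f₁,...,f_m) in the unique factorization domain K[u₁,u₂][t], and write f_i = f̄_i · h for i = 1,...,m. Let W₁, ..., W_{m−2} be new variables and let (t₀,s₀) ∈ K². Assume that the leading coefficient of f₁ with respect to t does not vanish at (t₀,s₀), and that Res_t(f̄₁, f̄₂ + Σ_{i=3}^{m} W_{i−2}·f̄_i), which is a polynomial in K[u₁,u₂][W₁,...,W_{m−2}], does not vanish identically after substituting (u₁,u₂) = (t₀,s₀). Then h(t₀,s₀,t) is a greatest common divisor of f₁(t₀,s₀,t),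 ..., f_m(t₀,s₀,t) in K[t], i.e. h(t₀,s₀,t) divides each f_i(t₀,s₀,t) and every common divisor of the f_i(t₀,s₀,t) in K[t] divides it. -/
/-- The resultant of two polynomials with respect to their main variable,
defined as the determinant of the Sylvester matrix. -/
noncomputable def sylvesterResultant {R : Type*} [CommRing R] (f g : Polynomial R) : R :=
  (Matrix.of fun (k j : Fin (g.natDegree + f.natDegree)) =>
    Fin.addCases (motive := fun _ => R)
      (fun i : Fin g.natDegree =>
        if (i : ℕ) ≤ (k : ℕ) then f.coeff ((k : ℕ) - (i : ℕ)) else 0)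
      (fun i : Fin f.natDegree =>
        if (i : ℕ) ≤ (k : ℕ) then g.coeff ((k : ℕ) - (i : ℕ)) else 0)
      j).det

/-!
Since `f i = f̄ i * h`, it suffices that the specialized `f̄ i` have unit gcd in `K[t]`; as `K` is
algebraically closed, otherwise they share a root `α`. Then `F = f̄₁` and `G = f̄₂ + ∑ Wⱼ f̄ⱼ₊₂`,
specialized at `(t₀, s₀)`, both vanish at `t = α` over `K[W]`. Specialization preserves the
Sylvester matrix with its original sizes, and such a resultant is a combination `a F + b G` as
soon as one size is positive; here `deg f̄₁ > 0` because its specialization is nonzero (the leading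
coefficient of `f₁` survives) and has the root `α`. Hence the specialized resultant vanishes.
-/

open Polynomial

theorem sylvesterResultant_eq_resultant {R : Type*} [CommRing R] (f g : R[X]) :
    sylvesterResultant f g = resultant g f := by
  unfold sylvesterResultant resultant sylvester
  congr 1
  ext i j
  -- Mathlib's band condition `i ≤ j + deg` only drops coefficients beyond the degree
  induction j using Fin.addCases <;>
  · simp only [Matrix.of_apply, Fin.addCases_left, Fin.addCases_right, Set.mem_Icc]
    split_ifs <;> first
      | rfl
      | (exfalso; omega)
      | exact coeff_eq_zero_of_natDegree_lt (by omega)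

theorem Polynomial.resultant_eq_zero_of_eval_eq_zero {R : Type*} [CommRing R] {f g : R[X]}
    {m n : ℕ} (hf : f.natDegree ≤ m) (hg : g.natDegree ≤ n) (hmn : m ≠ 0 ∨ n ≠ 0) {x : R}
    (hfx : f.eval x = 0) (hgx : g.eval x = 0) : resultant f g m n = 0 := by
  obtain ⟨p, q, -, -, hpq⟩ := exists_mul_add_mul_eq_C_resultant f g hf hg hmn
  simpa [hfx, hgx] using congrArg (eval x) hpq.symm

theorem Polynomial.eval_C_map_mvPolynomialMap_map_C {σ R S : Type*} [CommSemiring R]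
    [CommSemiring S] (E : R →+* S) (p : R[X]) (α : S) :
    ((p.map (MvPolynomial.C : R →+* MvPolynomial σ R)).map (MvPolynomial.map E)).eval
      (MvPolynomial.C α) = MvPolynomial.C ((p.map E).eval α) := by
  rw [Polynomial.map_map, MvPolynomial.map_comp_C, ← Polynomial.map_map, eval_map,
    eval₂_at_apply]

theorem Polynomial.isUnit_finset_gcd_of_not_exists_common_root {ι K : Type*} [Field K]
    [IsAlgClosed K] [DecidableEq K] {s : Finset ι} {p : ι → K[X]}
    (hroot : ¬∃ α, ∀ j ∈ s, (p j).IsRoot α) : IsUnit (s.gcd p) := by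
  by_contra hunit
  obtain ⟨α, hα⟩ := IsAlgClosed.exists_root (s.gcd p)
    fun hdeg => hunit (isUnit_iff_degree_eq_zero.mpr hdeg)
  exact hroot ⟨α, fun j hj => eval_eq_zero_of_dvd_of_eval_eq_zero (Finset.gcd_dvd hj) hα⟩

theorem Finset.dvd_of_forall_dvd_mul_of_isUnit_gcd {ι α : Type*} [CommMonoidWithZero α]
    [StrongNormalizedGCDMonoid α] {s : Finset ι} {p : ι → α} (hp : IsUnit (s.gcd p)) {c d : α}
    (hd : ∀ i ∈ s, d ∣ c * p i) : d ∣ c :=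
  calc d ∣ s.gcd (fun i => c * p i) := Finset.dvd_gcd hd
    _ = normalize c * s.gcd p := Finset.gcd_mul_left
    _ ∣ c * 1 := mul_dvd_mul (normalize_associated c).dvd (isUnit_iff_dvd_one.mp hp)
    _ = c := mul_one c

theorem map_sylvesterResultant_generic_eq_zero_of_common_root {R S : Type*} [CommRing R]
    [CommRing S] {k : ℕ} (E : R →+* S) (p : Fin (k + 2) → R[X]) (hp : (p 0).map E ≠ 0) {α : S}
    (hα : ∀ i, ((p i).map E).eval α = 0) :
    MvPolynomial.map E (sylvesterResultant ((p 0).map MvPolynomial.C)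
      ((p 1).map MvPolynomial.C + ∑ j : Fin k, C (MvPolynomial.X j) *
        (p ⟨(j : ℕ) + 2, Nat.add_lt_add_right j.isLt 2⟩).map MvPolynomial.C)) = 0 := by
  have hdeg : 0 < (p 0).natDegree := natDegree_pos_iff_degree_pos.mpr <|
    (degree_pos_of_root hp (hα 0)).trans_le degree_map_le
  rw [sylvesterResultant_eq_resultant, ← resultant_map_map]
  refine resultant_eq_zero_of_eval_eq_zero natDegree_map_le natDegree_map_le (Or.inr ?_)
    (x := MvPolynomial.C α) ?_ ?_
  · rw [natDegree_map_eq_of_injective (MvPolynomial.C_injective _ _)]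
    exact hdeg.ne'
  · simp only [Polynomial.map_add, Polynomial.map_sum, Polynomial.map_mul, map_C, eval_add,
      eval_finsetSum, eval_mul, eval_C_map_mvPolynomialMap_map_C, hα, map_zero, mul_zero,
      Finset.sum_const_zero, add_zero]
  · rw [eval_C_map_mvPolynomialMap_map_C, hα, map_zero]

theorem gcd_family_specialization_general {K : Type*} [Field K] [IsAlgClosed K]
    (k : ℕ) -- the number of polynomials is `m = k + 2 ≥ 2`
    (f : Fin (k + 2) → Polynomial (MvPolynomial (Fin 2) K))
    (h : Polynomial (MvPolynomial (Fin 2) K))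
    -- `h` is a gcd of the family `f i`:
    (hh₁ : ∀ i, h ∣ f i)
    (fbar : Fin (k + 2) → Polynomial (MvPolynomial (Fin 2) K))
    (hfbar : ∀ i, f i = fbar i * h)
    (t₀ s₀ : K)
    -- inclusion of `K[u₁,u₂][t]` into `K[u₁,u₂][W₁,…,W_k][t]`:
    (ι : Polynomial (MvPolynomial (Fin 2) K) →+*
        Polynomial (MvPolynomial (Fin k) (MvPolynomial (Fin 2) K)))
    (hι : ι = Polynomial.mapRingHom MvPolynomial.C)
    -- the leading coefficient of `f₁` w.r.t. `t` does not vanish at `(t₀, s₀)`: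
    (hlead : MvPolynomial.eval ![t₀, s₀] (f 0).leadingCoeff ≠ 0)
    -- `Res_t(f̄₁, f̄₂ + Σ W_{i-2}·f̄_i)` does not vanish after substituting
    -- `(u₁,u₂) = (t₀,s₀)`:
    (hres : MvPolynomial.map (MvPolynomial.eval ![t₀, s₀])
        (sylvesterResultant (ι (fbar 0))
          (ι (fbar 1) + ∑ j : Fin k, Polynomial.C (MvPolynomial.X j) *
            ι (fbar ⟨(j : ℕ) + 2, Nat.add_lt_add_right j.isLt 2⟩))) ≠ 0)
    -- evaluation of the coefficients at `(u₁,u₂) = (t₀,s₀)`: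
    (ev : Polynomial (MvPolynomial (Fin 2) K) →+* Polynomial K)
    (hev : ev = Polynomial.mapRingHom (MvPolynomial.eval ![t₀, s₀])) :
    (∀ i, ev h ∣ ev (f i)) ∧ ∀ d : Polynomial K, (∀ i, d ∣ ev (f i)) → d ∣ ev h := by
  classical
  subst hev hι
  set E := MvPolynomial.eval ![t₀, s₀]
  simp only [coe_mapRingHom] at hres ⊢
  refine ⟨fun i => Polynomial.map_dvd E (hh₁ i), fun d hd => ?_⟩
  have hf₀ : (f 0).map E ≠ 0 := by
    rw [← leadingCoeff_ne_zero, leadingCoeff_map_of_leadingCoeff_ne_zero E hlead]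
    exact hlead
  have hfbar₀ : (fbar 0).map E ≠ 0 :=
    left_ne_zero_of_mul (by rwa [← Polynomial.map_mul, ← hfbar 0])
  have hcoprime : IsUnit (Finset.univ.gcd fun i => (fbar i).map E) :=
    isUnit_finset_gcd_of_not_exists_common_root fun ⟨α, hα⟩ => hres <|
      map_sylvesterResultant_generic_eq_zero_of_common_root E fbar hfbar₀
        fun i => hα i (Finset.mem_univ i)
  refine Finset.dvd_of_forall_dvd_mul_of_isUnit_gcd hcoprime fun i _ => ?_
  rw [mul_comm, ← Polynomial.map_mul, ← hfbar i]
  exact hd i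

theorem gcd_family_specialization {K : Type*} [Field K] [IsAlgClosed K] [CharZero K]
    (k : ℕ) -- the number of polynomials is `m = k + 2 ≥ 2`
    (f : Fin (k + 2) → Polynomial (MvPolynomial (Fin 2) K))
    (hf : ∀ i, f i ≠ 0)
    (h : Polynomial (MvPolynomial (Fin 2) K))
    -- `h` is a gcd of the family `f i`:
    (hh₁ : ∀ i, h ∣ f i)
    (hh₂ : ∀ d, (∀ i, d ∣ f i) → d ∣ h)
    (fbar : Fin (k + 2) → Polynomial (MvPolynomial (Fin 2) K))
    (hfbar : ∀ i, f i = fbar i * h)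
    (t₀ s₀ : K)
    -- inclusion of `K[u₁,u₂][t]` into `K[u₁,u₂][W₁,…,W_k][t]`:
    (ι : Polynomial (MvPolynomial (Fin 2) K) →+*
        Polynomial (MvPolynomial (Fin k) (MvPolynomial (Fin 2) K)))
    (hι : ι = Polynomial.mapRingHom MvPolynomial.C)
    -- the leading coefficient of `f₁` w.r.t. `t` does not vanish at `(t₀, s₀)`:
    (hlead : MvPolynomial.eval ![t₀, s₀] (f 0).leadingCoeff ≠ 0)
    -- `Res_t(f̄₁, f̄₂ + Σ W_{i-2}·f̄_i)` does not vanish after substituting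
    -- `(u₁,u₂) = (t₀,s₀)`:
    (hres : MvPolynomial.map (MvPolynomial.eval ![t₀, s₀])
        (sylvesterResultant (ι (fbar 0))
          (ι (fbar 1) + ∑ j : Fin k, Polynomial.C (MvPolynomial.X j) *
            ι (fbar ⟨(j : ℕ) + 2, Nat.add_lt_add_right j.isLt 2⟩))) ≠ 0)
    -- evaluation of the coefficients at `(u₁,u₂) = (t₀,s₀)`:
    (ev : Polynomial (MvPolynomial (Fin 2) K) →+* Polynomial K)
    (hev : ev = Polynomial.mapRingHom (MvPolynomial.eval ![t₀, s₀])) :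
    (∀ i, ev h ∣ ev (f i)) ∧ ∀ d : Polynomial K, (∀ i, d ∣ ev (f i)) → d ∣ ev h :=
  gcd_family_specialization_general k f h hh₁ fbar hfbar t₀ s₀ ι hι hlead hres ev hev
end
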